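/- arXiv:1605.02933 — 6 statements merged into one kernel-verified Lean document; each statement's English description precedes it below -/
import Mathlib

section
/- Suppose τ > 0, n > 1 are real numbers and [S], [SS], [SI] : [0,∞) → ℝ are functions with [S] differentiable and strictly positive, [SS] differentiable and strictly positive, [SI] continuous, satisfying [S]'(t) = -τ·[SI](t) and [SS]'(t) = -2τ·((n-1)/n)·[SS](t)·[SI](t)/[S](t) for all t ≥ 0. Then the function U(t) = [SS](t)/[S](t)^{2(n-1)/n} is constant on [0,∞), i.e. U(t) = U(0) for all t ≥ 0. -/
open Real

/-- The quotient rule, with `(f ^ c)' = c f' f ^ c / f`, makes the two terms of the numerator cancel. -/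
theorem hasDerivAt_div_rpow_eq_zero {f g : ℝ → ℝ} {f' c x : ℝ}
    (hf : HasDerivAt f f' x) (hfx : 0 < f x) (hg : HasDerivAt g (c * g x * f' / f x) x) :
    HasDerivAt (fun t => g t / f t ^ c) 0 x := by
  have hpow : HasDerivAt (fun t => f t ^ c) (f' * c * f x ^ (c - 1)) x :=
    hf.rpow_const (Or.inl hfx.ne')
  refine (hg.div hpow (rpow_pos_of_pos hfx c).ne').congr_deriv ?_
  rw [rpow_sub hfx, rpow_one]
  field_simp
  ring

theorem pairwise_first_integral_general
    (τ n : ℝ)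
    (S SS SI : ℝ → ℝ)
    (hSpos : ∀ t ≥ (0:ℝ), 0 < S t)
    (hS' : ∀ t ≥ (0:ℝ), HasDerivAt S (-τ * SI t) t)
    (hSS' : ∀ t ≥ (0:ℝ),
      HasDerivAt SS (-2 * τ * ((n - 1) / n) * SS t * SI t / S t) t) :
    ∀ t ≥ (0:ℝ), SS t / S t ^ (2 * (n - 1) / n) = SS 0 / S 0 ^ (2 * (n - 1) / n) := by
  intro t ht
  have hU : ∀ x ≥ (0:ℝ), HasDerivAt (fun t => SS t / S t ^ (2 * (n - 1) / n)) 0 x := by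
    intro x hx
    refine hasDerivAt_div_rpow_eq_zero (hS' x hx) (hSpos x hx) ?_
    convert hSS' x hx using 1
    ring
  exact constant_of_has_deriv_right_zero (fun x hx => (hU x hx.1).continuousAt.continuousWithinAt)
    (fun x hx => (hU x hx.1).hasDerivWithinAt) t ⟨ht, le_rfl⟩

/-- The function `U(t) = [SS](t) / [S](t)^{2(n-1)/n}` is a first integral of the
pairwise SIR model: it is constant on `[0,∞)`. -/
theorem pairwise_first_integral
    (τ n : ℝ) (hτ : 0 < τ) (hn : 1 < n)
    (S SS SI : ℝ → ℝ)
    (hSpos : ∀ t ≥ (0:ℝ), 0 < S t)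
    (hSSpos : ∀ t ≥ (0:ℝ), 0 < SS t)
    (hSIcont : ContinuousOn SI (Set.Ici 0))
    (hS' : ∀ t ≥ (0:ℝ), HasDerivAt S (-τ * SI t) t)
    (hSS' : ∀ t ≥ (0:ℝ),
      HasDerivAt SS (-2 * τ * ((n - 1) / n) * SS t * SI t / S t) t) :
    ∀ t ≥ (0:ℝ), SS t / S t ^ (2 * (n - 1) / n) = SS 0 / S 0 ^ (2 * (n - 1) / n) :=
  pairwise_first_integral_general τ n S SS SI hSpos hS' hSS'
end

section
/- Suppose τ > 0, n > 1, N > 0 are real numbers and [S], [SS], [SI] : [0,∞) → ℝ are functions with [S] differentiable and strictly positive, [SS] differentiable and strictly positive, [SI] continuous, satisfying [S]'(t) = -τ·[SI](t) and [SS]'(t) = -2τ·((n-1)/n)·[SS](t)·[SI](t)/[S](t) for all t ≥ 0, and with the initial condition [SS](0) = (n/N)·[S](0)². Then for all t ≥ 0 one has [SS](t) = (n/N)·[S](0)^{2/n}·[S](t)^{2(n-1)/n}. -/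
open Real

/-!
If `g' / g = α f' / f` then `g · f ^ (-α)` has zero derivative, so it is a first integral.
For the pairwise SIR model, `[SS]' / [SS] = (2(n-1)/n) · [S]' / [S]`, hence
`[SS] = [SS](0) [S](0) ^ (-α) [S] ^ α` with `α = 2(n-1)/n`, and the initial condition
turns the constant into `(n/N) [S](0) ^ (2 - α) = (n/N) [S](0) ^ (2/n)`.
-/

theorem hasDerivAt_mul_rpow_neg_eq_zero {f g : ℝ → ℝ} {f' α x : ℝ}
    (hf : HasDerivAt f f' x) (hfx : 0 < f x) (hg : HasDerivAt g (α * g x * f' / f x) x) :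
    HasDerivAt (fun t => g t * f t ^ (-α)) 0 x := by
  refine (hg.mul (hf.rpow_const (p := -α) (Or.inl hfx.ne'))).congr_deriv ?_
  rw [rpow_sub hfx, rpow_one]
  field_simp
  ring

theorem eq_mul_rpow_of_hasDerivAt {f g f' : ℝ → ℝ} {a α : ℝ}
    (hfpos : ∀ t ≥ a, 0 < f t) (hf : ∀ t ≥ a, HasDerivAt f (f' t) t)
    (hg : ∀ t ≥ a, HasDerivAt g (α * g t * f' t / f t) t) :
    ∀ t ≥ a, g t = g a * f a ^ (-α) * f t ^ α := by
  intro t ht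
  have hconst : ∀ x ∈ Set.Icc a t, g x * f x ^ (-α) = g a * f a ^ (-α) := by
    have hderiv x (hx : x ∈ Set.Icc a t) :=
      hasDerivAt_mul_rpow_neg_eq_zero (hf x hx.1) (hfpos x hx.1) (hg x hx.1)
    exact constant_of_has_deriv_right_zero
      (fun x hx => (hderiv x hx).continuousAt.continuousWithinAt)
      (fun x hx => (hderiv x (Set.Ico_subset_Icc_self hx)).hasDerivWithinAt)
  rw [← hconst t ⟨ht, le_rfl⟩, mul_assoc, ← rpow_add (hfpos t ht), neg_add_cancel, rpow_zero,
    mul_one]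

theorem pairwise_first_integral_formula_general
    (τ n N : ℝ) (hn : 1 < n)
    (S SS SI : ℝ → ℝ)
    (hSpos : ∀ t ≥ (0:ℝ), 0 < S t)
    (hS' : ∀ t ≥ (0:ℝ), HasDerivAt S (-τ * SI t) t)
    (hSS' : ∀ t ≥ (0:ℝ),
      HasDerivAt SS (-2 * τ * ((n - 1) / n) * SS t * SI t / S t) t)
    (hinit : SS 0 = (n / N) * S 0 ^ 2) :
    ∀ t ≥ (0:ℝ), SS t = (n / N) * S 0 ^ (2 / n) * S t ^ (2 * (n - 1) / n) := by
  intro t ht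
  have hSS'_logDeriv t (ht : t ≥ 0) :
      HasDerivAt SS (2 * (n - 1) / n * SS t * (-τ * SI t) / S t) t :=
    (hSS' t ht).congr_deriv (by ring)
  rw [eq_mul_rpow_of_hasDerivAt hSpos hS' hSS'_logDeriv t ht, hinit, mul_assoc (n / N),
    ← rpow_natCast, ← rpow_add (hSpos 0 le_rfl)]
  congr 3
  field_simp
  ring

/-- Using the first integral of the pairwise SIR model together with the initial
condition `[SS](0) = (n/N)·[S](0)²`, we obtain
`[SS](t) = (n/N)·[S](0)^{2/n}·[S](t)^{2(n-1)/n}` for all `t ≥ 0`. -/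
theorem pairwise_first_integral_formula
    (τ n N : ℝ) (hτ : 0 < τ) (hn : 1 < n) (hN : 0 < N)
    (S SS SI : ℝ → ℝ)
    (hSpos : ∀ t ≥ (0:ℝ), 0 < S t)
    (hSSpos : ∀ t ≥ (0:ℝ), 0 < SS t)
    (hSIcont : ContinuousOn SI (Set.Ici 0))
    (hS' : ∀ t ≥ (0:ℝ), HasDerivAt S (-τ * SI t) t)
    (hSS' : ∀ t ≥ (0:ℝ),
      HasDerivAt SS (-2 * τ * ((n - 1) / n) * SS t * SI t / S t) t)
    (hinit : SS 0 = (n / N) * S 0 ^ 2) :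
    ∀ t ≥ (0:ℝ), SS t = (n / N) * S 0 ^ (2 / n) * S t ^ (2 * (n - 1) / n) :=
  pairwise_first_integral_formula_general τ n N hn S SS SI hSpos hS' hSS' hinit
end

section
/- Let τ > 0, κ ∈ ℝ and n > 1 be real numbers, and let S, σ : [0,∞) → ℝ with S differentiable, S(t) > 0 for all t, σ continuous and nonnegative, S'(t) = -τ·σ(t), and suppose S∞ = lim_{t→∞} S(t) exists with S∞ > 0. Then ∫₀^∞ ∫₀ᵘ τκ·S(c)^{−1/n}·σ(c)·e^{τc}·e^{−τu} dc du = −(κ/τ)·(n/(n−1))·(S∞^{(n−1)/n} − S(0)^{(n−1)/n}), provided the iterated integral is finite. -/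
/-!
Writing `h = S^{-1/n} σ`, the inner integral is `X(u) e^{-τu}` with `X(u) = ∫₀ᵘ h(c) e^{τc} dc`.
Since `(X(u) e^{-τu})' = h(u) - τ X(u) e^{-τu}`, the function `(G(u) - X(u) e^{-τu}) / τ` is an
antiderivative of the integrand whenever `G' = h`; this is the exchange of the order of
integration, done by parts. The boundary term `X(u) e^{-τu}` vanishes at infinity because `G`
converges, and `G = -(1/τ) · S^p / p` with `p = (n-1)/n`, since `S' = -τσ`.
-/

open Real MeasureTheory Filter Topology intervalIntegral Set

section ExpConvolution

variable {h G : ℝ → ℝ} {τ L : ℝ}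

theorem integral_mul_exp_le_of_hasDerivAt (hτ : 0 ≤ τ) (hh : Continuous h)
    (hh0 : ∀ t, 0 ≤ h t) (hG : ∀ t, HasDerivAt G (h t) t) {a b : ℝ} (hab : a ≤ b) :
    ∫ c in a..b, h c * exp (τ * c) ≤ (G b - G a) * exp (τ * b) :=
  calc ∫ c in a..b, h c * exp (τ * c) ≤ ∫ c in a..b, h c * exp (τ * b) := by
        refine integral_mono_on hab (Continuous.intervalIntegrable (by fun_prop) _ _)
          (Continuous.intervalIntegrable (by fun_prop) _ _) fun c hc => ?_
        exact mul_le_mul_of_nonneg_left (exp_le_exp.2 (mul_le_mul_of_nonneg_left hc.2 hτ)) (hh0 c)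
    _ = (G b - G a) * exp (τ * b) := by
        rw [intervalIntegral.integral_mul_const, integral_eq_sub_of_hasDerivAt (fun t _ => hG t)
          (hh.intervalIntegrable a b)]

theorem integral_mul_exp_mul_exp_neg_le (hτ : 0 ≤ τ) (hh : Continuous h)
    (hh0 : ∀ t, 0 ≤ h t) (hG : ∀ t, HasDerivAt G (h t) t) {u : ℝ} (hu : 0 ≤ u) :
    (∫ c in 0..u, h c * exp (τ * c)) * exp (-τ * u) ≤
      (G (u / 2) - G 0) * exp (-(τ / 2) * u) + (G u - G (u / 2)) := by
  have hk : Continuous fun c => h c * exp (τ * c) := by fun_prop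
  rw [← integral_add_adjacent_intervals (b := u / 2) (hk.intervalIntegrable _ _)
    (hk.intervalIntegrable _ _)]
  calc _ ≤ ((G (u / 2) - G 0) * exp (τ * (u / 2)) + (G u - G (u / 2)) * exp (τ * u)) *
        exp (-τ * u) := by
        gcongr
        · exact integral_mul_exp_le_of_hasDerivAt hτ hh hh0 hG (by linarith)
        · exact integral_mul_exp_le_of_hasDerivAt hτ hh hh0 hG (by linarith)
    _ = _ := by
        rw [add_mul, mul_assoc, mul_assoc, ← exp_add, ← exp_add,
          show τ * u + -τ * u = 0 by ring, exp_zero, mul_one]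
        ring_nf

theorem tendsto_integral_mul_exp_mul_exp_neg (hτ : 0 < τ) (hh : Continuous h)
    (hh0 : ∀ t, 0 ≤ h t) (hG : ∀ t, HasDerivAt G (h t) t) (hGL : Tendsto G atTop (𝓝 L)) :
    Tendsto (fun u => (∫ c in 0..u, h c * exp (τ * c)) * exp (-τ * u)) atTop (𝓝 0) := by
  have hGL_half : Tendsto (fun u => G (u / 2)) atTop (𝓝 L) :=
    hGL.comp (tendsto_id.atTop_div_const two_pos)
  have hexp : Tendsto (fun u => exp (-(τ / 2) * u)) atTop (𝓝 0) := by
    simpa only [Function.comp_def, id, neg_mul] using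
      tendsto_exp_neg_atTop_nhds_zero.comp (tendsto_id.const_mul_atTop (half_pos hτ))
  have hbound : Tendsto (fun u => (G (u / 2) - G 0) * exp (-(τ / 2) * u) + (G u - G (u / 2)))
      atTop (𝓝 0) := by
    simpa using ((hGL_half.sub_const (G 0)).mul hexp).add (hGL.sub hGL_half)
  refine tendsto_of_tendsto_of_tendsto_of_le_of_le' tendsto_const_nhds hbound ?_ ?_
  · filter_upwards [eventually_ge_atTop 0] with u hu
    exact mul_nonneg (integral_nonneg hu fun c _ => mul_nonneg (hh0 c) (exp_pos _).le)
      (exp_pos _).le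
  · filter_upwards [eventually_ge_atTop 0] with u hu
    exact integral_mul_exp_mul_exp_neg_le hτ.le hh hh0 hG hu

theorem integral_Ioi_integral_mul_exp_mul_exp_neg (hτ : 0 < τ) (hh : Continuous h)
    (hh0 : ∀ t, 0 ≤ h t) (hG : ∀ t, HasDerivAt G (h t) t) (hGL : Tendsto G atTop (𝓝 L)) :
    ∫ u in Ioi 0, (∫ c in 0..u, h c * exp (τ * c)) * exp (-τ * u) = (L - G 0) / τ := by
  set X : ℝ → ℝ := fun u => ∫ c in 0..u, h c * exp (τ * c)
  have hΦ : ∀ u, HasDerivAt (fun u => (G u - X u * exp (-τ * u)) / τ) (X u * exp (-τ * u)) u := by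
    intro u
    have hX : HasDerivAt X (h u * exp (τ * u)) u :=
      ((by fun_prop : Continuous fun c => h c * exp (τ * c)).integral_hasStrictDerivAt
        0 u).hasDerivAt
    have hE : HasDerivAt (fun u => exp (-τ * u)) (exp (-τ * u) * (-τ * 1)) u :=
      ((hasDerivAt_id u).const_mul (-τ)).exp
    refine (((hG u).sub (hX.mul hE)).div_const τ).congr_deriv ?_
    rw [mul_assoc (h u), ← exp_add, show τ * u + -τ * u = 0 by ring, exp_zero]
    field_simp
    ring
  have hΦL : Tendsto (fun u => (G u - X u * exp (-τ * u)) / τ) atTop (𝓝 (L / τ)) := by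
    simpa using (hGL.sub (tendsto_integral_mul_exp_mul_exp_neg hτ hh hh0 hG hGL)).div_const τ
  rw [integral_Ioi_of_hasDerivAt_of_nonneg (hΦ 0).continuousAt.continuousWithinAt
    (fun u _ => hΦ u)
    (fun u hu => mul_nonneg (integral_nonneg (le_of_lt hu) fun c _ =>
      mul_nonneg (hh0 c) (exp_pos _).le) (exp_pos _).le) hΦL]
  simp [X, sub_div]

end ExpConvolution

theorem hasDerivAt_rpow_div_self {S : ℝ → ℝ} {S' p t : ℝ} (hS : HasDerivAt S S' t)
    (hSt : S t ≠ 0) (hp : p ≠ 0) :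
    HasDerivAt (fun t => S t ^ p / p) (S t ^ (p - 1) * S') t := by
  refine ((hS.rpow_const (Or.inl hSt)).div_const p).congr_deriv ?_
  field_simp

theorem pairwise_integral_I2_general
    (τ κ n : ℝ) (hτ : 0 < τ) (hn : 1 < n)
    (S σ : ℝ → ℝ)
    (hSpos : ∀ t, 0 < S t)
    (hσcont : Continuous σ) (hσnonneg : ∀ t, 0 ≤ σ t)
    (hS' : ∀ t, HasDerivAt S (-τ * σ t) t)
    (Sinf : ℝ) (hSinf_lim : Tendsto S atTop (nhds Sinf)) :
    ∫ u in Set.Ioi (0:ℝ), ∫ c in (0:ℝ)..u,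
        τ * κ * S c ^ (-(1 : ℝ) / n) * σ c * Real.exp (τ * c) * Real.exp (-τ * u) =
      -(κ / τ) * (n / (n - 1)) * (Sinf ^ ((n - 1) / n) - S 0 ^ ((n - 1) / n)) := by
  set p := (n - 1) / n with hp_def
  have hp : 0 < p := div_pos (sub_pos.2 hn) (one_pos.trans hn)
  have hp_sub : p - 1 = -1 / n := by rw [hp_def]; field_simp; ring
  have hScont : Continuous S := continuous_iff_continuousAt.2 fun t => (hS' t).continuousAt
  have hG : ∀ t, HasDerivAt (fun t => -(S t ^ p / p) / τ) (S t ^ (-1 / n) * σ t) t := fun t => by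
    refine ((hasDerivAt_rpow_div_self (hS' t) (hSpos t).ne' hp.ne').neg.div_const τ).congr_deriv ?_
    rw [hp_sub]
    field_simp
  have key := integral_Ioi_integral_mul_exp_mul_exp_neg (h := fun t => S t ^ (-1 / n) * σ t) hτ
    ((hScont.rpow_const fun t => Or.inl (hSpos t).ne').mul hσcont)
    (fun t => mul_nonneg (rpow_nonneg (hSpos t).le _) (hσnonneg t)) hG
    (((hSinf_lim.rpow_const (Or.inr hp.le)).div_const p).neg.div_const τ)
  calc _ = ∫ u in Ioi 0, τ * κ *
        ((∫ c in 0..u, S c ^ (-1 / n) * σ c * exp (τ * c)) * exp (-τ * u)) := by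
        congr 1 with u
        rw [← intervalIntegral.integral_mul_const, ← intervalIntegral.integral_const_mul]
        congr 1 with c
        ring
    _ = _ := by
        rw [MeasureTheory.integral_const_mul, key, hp_def]
        field_simp
        ring

/-- Computation of the integral `I₂` in the proof of the pairwise final size
relation: `∫₀^∞ ∫₀ᵘ τκ·S(c)^{−1/n}·σ(c)·e^{τc}·e^{−τu} dc du
  = −(κ/τ)·(n/(n−1))·(S∞^{(n−1)/n} − S(0)^{(n−1)/n})`. -/
theorem pairwise_integral_I2
    (τ κ n : ℝ) (hτ : 0 < τ) (hn : 1 < n)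
    (S σ : ℝ → ℝ)
    (hSpos : ∀ t, 0 < S t)
    (hσcont : Continuous σ) (hσnonneg : ∀ t, 0 ≤ σ t)
    (hS' : ∀ t, HasDerivAt S (-τ * σ t) t)
    (Sinf : ℝ) (hSinf_lim : Tendsto S atTop (nhds Sinf)) (hSinf_pos : 0 < Sinf)
    (hint : IntegrableOn (fun u =>
      ∫ c in (0:ℝ)..u,
        τ * κ * S c ^ (-(1 : ℝ) / n) * σ c * Real.exp (τ * c) * Real.exp (-τ * u))
      (Set.Ioi 0)) :
    ∫ u in Set.Ioi (0:ℝ), ∫ c in (0:ℝ)..u,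
        τ * κ * S c ^ (-(1 : ℝ) / n) * σ c * Real.exp (τ * c) * Real.exp (-τ * u) =
      -(κ / τ) * (n / (n - 1)) * (Sinf ^ ((n - 1) / n) - S 0 ^ ((n - 1) / n)) :=
  pairwise_integral_I2_general τ κ n hτ hn S σ hSpos hσcont hσnonneg hS' Sinf hSinf_lim
end

section
/- Let τ > 0, κ ∈ ℝ and n > 1 be real numbers, let f : [0,∞) → [0,∞) be measurable with ∫₀^∞ f(a)·e^{−τa} da < ∞, and let S, σ : [0,∞) → ℝ with S differentiable, S(t) > 0 for all t, σ continuous and nonnegative, S'(t) = -τ·σ(t), and suppose S∞ = lim_{t→∞} S(t) exists with S∞ > 0. Then ∫₀^∞ ∫₀ᵘ ∫₀ᶜ τκ·S(c−a)^{−1/n}·σ(c−a)·f(a)·e^{−τa}·e^{τc}·e^{−τu} da dc du = −(κ/τ)·(n/(n−1))·(S∞^{(n−1)/n} − S(0)^{(n−1)/n})·∫₀^∞ f(a)·e^{−τa} da, provided the iterated integral is finite. -/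
/-! Put `E a = f a e^{-τa}`, `k t = τ S(t)^{-1/n} σ(t)` and `K t = e^{-τt}`. For `u > 0` the
inner double integral is `κ ((E ⋆ k) ⋆ K)(u)`, a convolution of functions supported on the
half-line, and the integral of a convolution is the product of the integrals (Fubini). Finally
`∫₀^∞ K = 1/τ`, and `∫₀^∞ k = (n/(n-1)) (S(0)^{(n-1)/n} - S∞^{(n-1)/n})` because `k` is the
derivative of `-(n/(n-1)) S^{(n-1)/n}`. -/

open Real MeasureTheory Filter intervalIntegral Set
open scoped Convolution

noncomputable def halfLineConv (f g : ℝ → ℝ) (x : ℝ) : ℝ := ∫ a in Ioc 0 x, f a * g (x - a)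

section

variable {f g : ℝ → ℝ}

theorem halfLineConv_eq_convolution :
    halfLineConv f g =
      (Ioi 0).indicator f ⋆[ContinuousLinearMap.mul ℝ ℝ, volume] (Ioi 0).indicator g := by
  ext x
  have hind : (fun a => (Ioi 0).indicator f a * (Ioi 0).indicator g (x - a)) =
      (Ioo 0 x).indicator fun a => f a * g (x - a) := by
    ext a
    by_cases ha : 0 < a <;> by_cases hxa : a < x <;>
      simp [ha, hxa, sub_pos]
  rw [convolution_mul, hind, MeasureTheory.integral_indicator measurableSet_Ioo, halfLineConv,
    integral_Ioc_eq_integral_Ioo]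

theorem halfLineConv_of_nonpos {x : ℝ} (hx : x ≤ 0) : halfLineConv f g x = 0 := by
  simp [halfLineConv, Ioc_eq_empty_of_le hx]

theorem integrable_halfLineConv (hf : IntegrableOn f (Ioi 0)) (hg : IntegrableOn g (Ioi 0)) :
    Integrable (halfLineConv f g) := by
  rw [halfLineConv_eq_convolution]
  exact ((integrable_indicator_iff measurableSet_Ioi).2 hf).integrable_convolution _
    ((integrable_indicator_iff measurableSet_Ioi).2 hg)

theorem integral_Ioi_halfLineConv (hf : IntegrableOn f (Ioi 0)) (hg : IntegrableOn g (Ioi 0)) :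
    ∫ x in Ioi 0, halfLineConv f g x = (∫ x in Ioi 0, f x) * ∫ x in Ioi 0, g x := by
  rw [setIntegral_eq_integral_of_forall_compl_eq_zero (s := Ioi 0) fun x hx =>
      halfLineConv_of_nonpos (not_lt.1 hx),
    halfLineConv_eq_convolution, integral_convolution _
      ((integrable_indicator_iff measurableSet_Ioi).2 hf)
      ((integrable_indicator_iff measurableSet_Ioi).2 hg),
    MeasureTheory.integral_indicator measurableSet_Ioi,
    MeasureTheory.integral_indicator measurableSet_Ioi]
  rfl

end

theorem HasDerivAt.neg_mul_rpow_sub_one_div {S g : ℝ → ℝ} {n t : ℝ}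
    (hS : HasDerivAt S (-g t) t) (hSt : S t ≠ 0) (hn0 : n ≠ 0) (hn1 : n - 1 ≠ 0) :
    HasDerivAt (fun t => -(n / (n - 1) * S t ^ ((n - 1) / n))) (S t ^ (-(1 : ℝ) / n) * g t) t := by
  refine ((hS.rpow_const (Or.inl hSt)).const_mul (n / (n - 1))).neg.congr_deriv ?_
  rw [show (n - 1) / n - 1 = -(1 : ℝ) / n by field_simp; ring]
  field_simp

section

variable {S g : ℝ → ℝ} {n Sinf : ℝ}

theorem integrableOn_Ioi_rpow_mul_of_hasDerivAt_neg (hn : 1 < n)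
    (hS : ∀ t, HasDerivAt S (-g t) t) (hSpos : ∀ t, 0 < S t) (hg : ∀ t, 0 ≤ g t)
    (hlim : Tendsto S atTop (nhds Sinf)) :
    IntegrableOn (fun t => S t ^ (-(1 : ℝ) / n) * g t) (Ioi 0) := by
  have hp : 0 ≤ (n - 1) / n := div_nonneg (by linarith) (by linarith)
  exact integrableOn_Ioi_deriv_of_nonneg'
    (fun t _ => (hS t).neg_mul_rpow_sub_one_div (hSpos t).ne' (by positivity) (by linarith))
    (fun t _ => mul_nonneg (rpow_nonneg (hSpos t).le _) (hg t))
    (((continuousAt_rpow_const Sinf _ (Or.inr hp)).tendsto.comp hlim).const_mul _).neg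

theorem integral_Ioi_rpow_mul_of_hasDerivAt_neg (hn : 1 < n)
    (hS : ∀ t, HasDerivAt S (-g t) t) (hSpos : ∀ t, 0 < S t) (hg : ∀ t, 0 ≤ g t)
    (hlim : Tendsto S atTop (nhds Sinf)) :
    ∫ t in Ioi 0, S t ^ (-(1 : ℝ) / n) * g t =
      n / (n - 1) * (S 0 ^ ((n - 1) / n) - Sinf ^ ((n - 1) / n)) := by
  have hp : 0 ≤ (n - 1) / n := div_nonneg (by linarith) (by linarith)
  rw [integral_Ioi_of_hasDerivAt_of_nonneg'
    (fun t _ => (hS t).neg_mul_rpow_sub_one_div (hSpos t).ne' (by positivity) (by linarith))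
    (fun t _ => mul_nonneg (rpow_nonneg (hSpos t).le _) (hg t))
    (((continuousAt_rpow_const Sinf _ (Or.inr hp)).tendsto.comp hlim).const_mul _).neg]
  ring

end

theorem pairwise_integral_I3_general
    (τ κ n : ℝ) (hτ : 0 < τ) (hn : 1 < n)
    (f : ℝ → ℝ)
    (hf_lap : IntegrableOn (fun a => f a * Real.exp (-τ * a)) (Set.Ioi 0))
    (S σ : ℝ → ℝ)
    (hSpos : ∀ t, 0 < S t)
    (hσnonneg : ∀ t, 0 ≤ σ t)
    (hS' : ∀ t, HasDerivAt S (-τ * σ t) t)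
    (Sinf : ℝ) (hSinf_lim : Tendsto S atTop (nhds Sinf)) :
    ∫ u in Set.Ioi (0:ℝ), ∫ c in (0:ℝ)..u, ∫ a in (0:ℝ)..c,
        τ * κ * S (c - a) ^ (-(1 : ℝ) / n) * σ (c - a) * f a
          * Real.exp (-τ * a) * Real.exp (τ * c) * Real.exp (-τ * u) =
      -(κ / τ) * (n / (n - 1)) * (Sinf ^ ((n - 1) / n) - S 0 ^ ((n - 1) / n))
        * ∫ a in Set.Ioi (0:ℝ), f a * Real.exp (-τ * a) := by
  set E := fun a => f a * exp (-τ * a)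
  set k := fun t => S t ^ (-(1 : ℝ) / n) * (τ * σ t)
  set K := fun t => exp (-τ * t)
  have hS : ∀ t, HasDerivAt S (-(τ * σ t)) t := fun t => neg_mul τ (σ t) ▸ hS' t
  have hτσ : ∀ t, 0 ≤ τ * σ t := fun t => mul_nonneg hτ.le (hσnonneg t)
  have hk := integrableOn_Ioi_rpow_mul_of_hasDerivAt_neg hn hS hSpos hτσ hSinf_lim
  have hK : IntegrableOn K (Ioi 0) := exp_neg_integrableOn_Ioi 0 hτ
  have hK_eq : ∫ t in Ioi 0, K t = 1 / τ := by
    simpa [K, neg_mul] using integral_exp_mul_Ioi (neg_lt_zero.2 hτ) 0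
  have hinner : ∀ u ∈ Ioi (0 : ℝ), (∫ c in (0:ℝ)..u, ∫ a in (0:ℝ)..c,
        τ * κ * S (c - a) ^ (-(1 : ℝ) / n) * σ (c - a) * f a
          * exp (-τ * a) * exp (τ * c) * exp (-τ * u)) =
      κ * halfLineConv (halfLineConv E k) K u := by
    intro u hu
    rw [integral_of_le hu.le, halfLineConv, ← MeasureTheory.integral_const_mul]
    refine setIntegral_congr_fun measurableSet_Ioc fun c hc => ?_
    rw [integral_of_le hc.1.le, halfLineConv, ← MeasureTheory.integral_mul_const,
      ← MeasureTheory.integral_const_mul]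
    refine setIntegral_congr_fun measurableSet_Ioc fun a _ => ?_
    simp only [E, k, K, show -τ * (u - c) = τ * c + -τ * u by ring, exp_add]
    ring
  rw [setIntegral_congr_fun measurableSet_Ioi hinner, MeasureTheory.integral_const_mul,
    integral_Ioi_halfLineConv ((integrable_halfLineConv hf_lap hk).integrableOn) hK,
    integral_Ioi_halfLineConv hf_lap hk, hK_eq,
    integral_Ioi_rpow_mul_of_hasDerivAt_neg hn hS hSpos hτσ hSinf_lim]
  field_simp
  ring

/-- Computation of the integral `I₃` in the proof of the pairwise final size
relation: `∫₀^∞ ∫₀ᵘ ∫₀ᶜ τκ·S(c−a)^{−1/n}·σ(c−a)·f(a)·e^{−τa}·e^{τc}·e^{−τu} da dc du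
  = −(κ/τ)·(n/(n−1))·(S∞^{(n−1)/n} − S(0)^{(n−1)/n})·∫₀^∞ f(a)e^{−τa} da`. -/
theorem pairwise_integral_I3
    (τ κ n : ℝ) (hτ : 0 < τ) (hn : 1 < n)
    (f : ℝ → ℝ) (hf_meas : Measurable f) (hf_nonneg : ∀ a ≥ (0:ℝ), 0 ≤ f a)
    (hf_lap : IntegrableOn (fun a => f a * Real.exp (-τ * a)) (Set.Ioi 0))
    (S σ : ℝ → ℝ)
    (hSpos : ∀ t, 0 < S t)
    (hσcont : Continuous σ) (hσnonneg : ∀ t, 0 ≤ σ t)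
    (hS' : ∀ t, HasDerivAt S (-τ * σ t) t)
    (Sinf : ℝ) (hSinf_lim : Tendsto S atTop (nhds Sinf)) (hSinf_pos : 0 < Sinf)
    (hint : IntegrableOn (fun u =>
      ∫ c in (0:ℝ)..u, ∫ a in (0:ℝ)..c,
        τ * κ * S (c - a) ^ (-(1 : ℝ) / n) * σ (c - a) * f a
          * Real.exp (-τ * a) * Real.exp (τ * c) * Real.exp (-τ * u))
      (Set.Ioi 0)) :
    ∫ u in Set.Ioi (0:ℝ), ∫ c in (0:ℝ)..u, ∫ a in (0:ℝ)..c,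
        τ * κ * S (c - a) ^ (-(1 : ℝ) / n) * σ (c - a) * f a
          * Real.exp (-τ * a) * Real.exp (τ * c) * Real.exp (-τ * u) =
      -(κ / τ) * (n / (n - 1)) * (Sinf ^ ((n - 1) / n) - S 0 ^ ((n - 1) / n))
        * ∫ a in Set.Ioi (0:ℝ), f a * Real.exp (-τ * a) :=
  pairwise_integral_I3_general τ κ n hτ hn f hf_lap S σ hSpos hσnonneg hS' Sinf hSinf_lim
end

section
/- Let f, g : ℝ → ℝ be continuous and φ : ℝ → ℝ be differentiable, and for t > a ≥ 0 define x(t,a) = φ(t−a)·exp(−∫_{t−a}^{t} f(s) ds)·exp(−∫₀^{a} g(b) db). Then for every t > a ≥ 0 the map h ↦ x(t+h, a+h) is differentiable at h = 0 with derivative −(f(t) + g(a))·x(t,a); moreover x(t,0) = φ(t) for all t > 0. -/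
open Real MeasureTheory intervalIntegral

/-! Along the characteristic `h ↦ (t + h, a + h)` the argument `t - a` of `φ` is constant, so only
the two exponential factors vary, and each is the exponential of minus a running integral of a
continuous function, whose derivative is given by the fundamental theorem of calculus. -/

theorem hasDerivAt_exp_neg_integral {f : ℝ → ℝ} (hf : Continuous f) (c u : ℝ) :
    HasDerivAt (fun v => exp (-∫ s in c..v, f s)) (-f u * exp (-∫ s in c..u, f s)) u := by
  simpa only [Pi.neg_apply, mul_comm] using (hf.integral_hasStrictDerivAt c u).hasDerivAt.neg.exp

theorem hasDerivAt_exp_neg_integral_const_add {f : ℝ → ℝ} (hf : Continuous f) (c u : ℝ) :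
    HasDerivAt (fun h => exp (-∫ s in c..(u + h), f s)) (-f u * exp (-∫ s in c..u, f s)) 0 :=
  (hasDerivAt_exp_neg_integral hf c (u + 0)).comp_const_add u 0 |>.congr_deriv (by rw [add_zero])

theorem characteristics_solution_general
    (f g : ℝ → ℝ) (hf : Continuous f) (hg : Continuous g)
    (φ : ℝ → ℝ)
    (x : ℝ → ℝ → ℝ)
    (hx : ∀ t a : ℝ, x t a =
      φ (t - a) * Real.exp (-∫ s in (t - a)..t, f s) * Real.exp (-∫ b in (0:ℝ)..a, g b)) :
    (∀ t a : ℝ, 0 ≤ a → a < t →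
      HasDerivAt (fun h : ℝ => x (t + h) (a + h)) (-(f t + g a) * x t a) 0) ∧
    (∀ t : ℝ, 0 < t → x t 0 = φ t) := by
  refine ⟨fun t a _ _ => ?_, fun t _ => by simp [hx]⟩
  have along_characteristic : (fun h => x (t + h) (a + h)) = fun h =>
      φ (t - a) * exp (-∫ s in (t - a)..(t + h), f s) * exp (-∫ b in (0:ℝ)..(a + h), g b) := by
    funext h
    rw [hx, add_sub_add_right_eq_sub]
  rw [along_characteristic]
  refine ((hasDerivAt_exp_neg_integral_const_add hf (t - a) t).const_mul (φ (t - a))).mul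
    (hasDerivAt_exp_neg_integral_const_add hg 0 a) |>.congr_deriv ?_
  simp only [hx, add_zero]
  ring

/-- Verification of the solution along characteristic lines of the first-order
linear PDE `(∂ₜ + ∂ₐ)x(t,a) = −f(t)x(t,a) − g(a)x(t,a)` with boundary condition
`x(t,0) = φ(t)`: for `t > a ≥ 0`, the directional derivative of `x` along the
characteristic direction equals `−(f(t)+g(a))·x(t,a)`. -/
theorem characteristics_solution
    (f g : ℝ → ℝ) (hf : Continuous f) (hg : Continuous g)
    (φ : ℝ → ℝ) (hφ : Differentiable ℝ φ)
    (x : ℝ → ℝ → ℝ)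
    (hx : ∀ t a : ℝ, x t a =
      φ (t - a) * Real.exp (-∫ s in (t - a)..t, f s) * Real.exp (-∫ b in (0:ℝ)..a, g b)) :
    (∀ t a : ℝ, 0 ≤ a → a < t →
      HasDerivAt (fun h : ℝ => x (t + h) (a + h)) (-(f t + g a) * x t a) 0) ∧
    (∀ t : ℝ, 0 < t → x t 0 = φ t) :=
  characteristics_solution_general f g hf hg φ x hx
end

section
/- Let τ > 0, let f : [0,∞) → [0,∞) be continuous and bounded with ∫₀^∞ f = 1, set ξ(a) = ∫ₐ^∞ f(q) dq and assume ξ(a) > 0 for all a ≥ 0. Let σ : [0,∞) → ℝ be continuous and let φ : [0,∞) → [0,∞) be continuous with ∫₀^∞ φ(b)/ξ(b) db < ∞. Define I(t) = ∫₀ᵗ τ·σ(t−a)·ξ(a) da + ∫ₜ^∞ φ(a−t)·ξ(a)/ξ(a−t) da. Then I is differentiable on (0,∞) and I'(t) = τ·σ(t) − ∫₀ᵗ τ·σ(t−a)·f(a) da − ∫ₜ^∞ φ(a−t)·f(a)/ξ(a−t) da for all t > 0. -/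
/-!
After the shift `a = b + t`, the tail term is `∫_{b>0} (φ b / ξ b) ξ(b + t) db`: the variable
`t` now only enters through `ξ`, whose derivative `-f` is bounded, so it is differentiated under
the integral sign with the integrable dominating function `M φ / ξ`.

For the convolution term, `ξ = 1 - F` with `F x = ∫₀ˣ f` turns it into
`∫₀ᵘ τσ - ∫₀ᵘ τσ(a) F(u - a) da`. Extending `F` by `0` to negative arguments
(`x ↦ ∫₀^{max x 0} f`) lets the variable upper limit `u` be replaced by a fixed `T > u`; the
extended primitive is Lipschitz and differentiable away from `0`, which is all that
differentiation under the integral sign with a Lipschitz bound needs, and no boundary term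
appears because `F 0 = 0`.
-/

open Real MeasureTheory intervalIntegral Topology Set Filter

theorem setIntegral_Ioi_eq_setIntegral_Ioi_zero_comp_add (H : ℝ → ℝ) (t : ℝ) :
    ∫ a in Ioi t, H a = ∫ b in Ioi 0, H (b + t) := by
  have := (measurePreserving_add_right volume t).setIntegral_preimage_emb
    (measurableEmbedding_addRight t) H (Ioi t)
  rw [preimage_add_const_Ioi, sub_self] at this
  exact this.symm

section MaxZeroPrimitive

variable {f : ℝ → ℝ}

theorem exists_lipschitzOnWith_integral_max_zero (hf : ContinuousOn f (Ici 0)) (T : ℝ) :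
    ∃ C, LipschitzOnWith C (fun x => ∫ s in 0..max x 0, f s) (Iic T) := by
  obtain ⟨C, hC⟩ := (isCompact_Icc (a := (0:ℝ)) (b := T)).exists_bound_of_continuousOn
    (hf.mono Icc_subset_Ici_self)
  have hint (x : ℝ) : IntervalIntegrable f volume 0 (max x 0) :=
    (hf.mono Icc_subset_Ici_self).intervalIntegrable_of_Icc (le_max_right x 0)
  refine ⟨C.toNNReal, .of_dist_le_mul fun x (hx : x ≤ T) y (hy : y ≤ T) => ?_⟩
  rw [dist_eq_norm, integral_interval_sub_left (hint x) (hint y), Real.dist_eq]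
  calc ‖∫ s in max y 0..max x 0, f s‖ ≤ C * |max x 0 - max y 0| := by
        refine norm_integral_le_of_norm_le_const fun s hs => hC s ?_
        rw [mem_uIoc] at hs
        constructor <;> grind
    _ ≤ C.toNNReal * |x - y| :=
        mul_le_mul (le_coe_toNNReal C) (abs_max_sub_max_le_abs x y 0) (abs_nonneg _)
          C.toNNReal.coe_nonneg

theorem continuous_integral_max_zero (hf : ContinuousOn f (Ici 0)) :
    Continuous fun x => ∫ s in 0..max x 0, f s :=
  continuous_iff_continuousAt.2 fun x =>
    (exists_lipschitzOnWith_integral_max_zero hf (x + 1)).choose_spec.continuousOn.continuousAt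
      (Iic_mem_nhds (lt_add_one x))

theorem hasDerivAt_integral_max_zero (hf : ContinuousOn f (Ici 0)) {x : ℝ} (hx : 0 < x) :
    HasDerivAt (fun y => ∫ s in 0..max y 0, f s) (f x) x := by
  have hFTC : HasDerivAt (fun y => ∫ s in 0..y, f s) (f x) x :=
    integral_hasDerivAt_right ((hf.mono Icc_subset_Ici_self).intervalIntegrable_of_Icc hx.le)
      ((hf.mono Ioi_subset_Ici_self).stronglyMeasurableAtFilter isOpen_Ioi x hx)
      (hf.continuousAt (Ici_mem_nhds hx))
  refine hFTC.congr_of_eventuallyEq ?_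
  filter_upwards [Ioi_mem_nhds hx] with y hy
  rw [max_eq_left hy.le]

theorem hasDerivAt_integral_max_zero_comp_sub (hf : ContinuousOn f (Ici 0)) {a t : ℝ}
    (hat : a ≠ t) :
    HasDerivAt (fun u => ∫ s in 0..max (u - a) 0, f s)
      ((Iic t).indicator (fun a => f (t - a)) a) t := by
  rcases hat.lt_or_gt with hlt | hgt
  · rw [indicator_of_mem (mem_Iic.2 hlt.le)]
    exact (hasDerivAt_integral_max_zero hf (sub_pos.2 hlt)).comp_sub_const t a
  · rw [indicator_of_notMem (notMem_Iic.2 hgt)]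
    refine (hasDerivAt_const t 0).congr_of_eventuallyEq ?_
    filter_upwards [Iio_mem_nhds hgt] with u (hu : u < a)
    simp [max_eq_right (sub_nonpos.2 hu.le)]

theorem hasDerivAt_of_eq_sub_integral {ξ : ℝ → ℝ} (hf : ContinuousOn f (Ici 0))
    (hξ : ∀ x ≥ 0, ξ x = ξ 0 - ∫ s in 0..x, f s) {x : ℝ} (hx : 0 < x) :
    HasDerivAt ξ (-f x) x := by
  refine ((hasDerivAt_integral_max_zero hf hx).const_sub (ξ 0)).congr_of_eventuallyEq ?_
  filter_upwards [Ioi_mem_nhds hx] with y (hy : 0 < y)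
  rw [hξ y hy.le, max_eq_left hy.le]

end MaxZeroPrimitive

theorem LipschitzOnWith.const_mul_comp_sub {P : ℝ → ℝ} {C : NNReal} {s : Set ℝ}
    (hP : LipschitzOnWith C P s) (c a : ℝ) :
    LipschitzOnWith (Real.nnabs (‖c‖ * C)) (fun u => c * P (u - a)) ((· - a) ⁻¹' s) := by
  refine LipschitzOnWith.of_dist_le_mul fun u hu v hv => ?_
  calc dist (c * P (u - a)) (c * P (v - a)) = ‖c‖ * dist (P (u - a)) (P (v - a)) := by
        rw [dist_eq_norm, dist_eq_norm, ← mul_sub, norm_mul]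
    _ ≤ ‖c‖ * (C * dist (u - a) (v - a)) :=
        mul_le_mul_of_nonneg_left (hP.dist_le_mul _ hu _ hv) (norm_nonneg _)
    _ = Real.nnabs (‖c‖ * C) * dist u v := by
        rw [dist_sub_right, Real.coe_nnabs, abs_of_nonneg (by positivity), mul_assoc]

theorem integral_indicator_Iic_of_le {h : ℝ → ℝ} {t T : ℝ} (h0t : 0 ≤ t) (htT : t ≤ T)
    (hint : IntervalIntegrable ((Iic t).indicator h) volume 0 T) :
    ∫ a in 0..T, (Iic t).indicator h a = ∫ a in 0..t, h a := by
  have ht : t ∈ uIcc 0 T := mem_uIcc_of_le h0t htT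
  rw [← integral_add_adjacent_intervals (hint.mono_set (uIcc_subset_uIcc_left ht))
    (hint.mono_set (uIcc_subset_uIcc_right ht))]
  have hvanish : ∫ a in t..T, (Iic t).indicator h a = 0 := by
    refine (intervalIntegral.integral_congr_ae (Eventually.of_forall fun a ha => ?_)).trans
      integral_zero
    rw [uIoc_of_le htT] at ha
    exact indicator_of_notMem (notMem_Iic.2 ha.1) h
  rw [hvanish, add_zero]
  refine integral_congr fun a ha => ?_
  rw [uIcc_of_le h0t] at ha
  exact indicator_of_mem (mem_Iic.2 ha.2) h

theorem integral_comp_sub_mul_comm (g k : ℝ → ℝ) (u : ℝ) :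
    ∫ a in 0..u, g (u - a) * k a = ∫ a in 0..u, g a * k (u - a) := by
  simpa using integral_comp_sub_left (a := 0) (b := u) (fun a => g a * k (u - a)) u

section Convolution

variable {g f : ℝ → ℝ}

theorem integral_mul_integral_sub_eq_integral_max_zero (hg : ContinuousOn g (Ici 0))
    (hf : ContinuousOn f (Ici 0)) {u T : ℝ} (hu : u ∈ Icc 0 T) :
    ∫ a in 0..u, g a * ∫ s in 0..u - a, f s =
      ∫ a in 0..T, g a * ∫ s in 0..max (u - a) 0, f s := by
  have hint : IntervalIntegrable (fun a => g a * ∫ s in 0..max (u - a) 0, f s) volume 0 T :=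
    ((hg.mono Icc_subset_Ici_self).mul ((continuous_integral_max_zero hf).comp
      (continuous_sub_left u)).continuousOn).intervalIntegrable_of_Icc (hu.1.trans hu.2)
  have hu' : u ∈ uIcc 0 T := mem_uIcc_of_le hu.1 hu.2
  rw [← integral_add_adjacent_intervals (hint.mono_set (uIcc_subset_uIcc_left hu'))
    (hint.mono_set (uIcc_subset_uIcc_right hu'))]
  have hvanish : ∫ a in u..T, g a * ∫ s in 0..max (u - a) 0, f s = 0 := by
    refine (integral_congr fun a ha => ?_).trans integral_zero
    rw [uIcc_of_le hu.2] at ha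
    simp [max_eq_right (sub_nonpos.2 ha.1)]
  rw [hvanish, add_zero]
  refine integral_congr fun a ha => ?_
  rw [uIcc_of_le hu.1] at ha
  simp only [max_eq_left (sub_nonneg.2 ha.2)]

theorem hasDerivAt_integral_mul_integral_max_zero (hg : ContinuousOn g (Ici 0))
    (hf : ContinuousOn f (Ici 0)) {t T : ℝ} (ht : 0 < t) (htT : t < T) :
    HasDerivAt (fun u => ∫ a in 0..T, g a * ∫ s in 0..max (u - a) 0, f s)
      (∫ a in 0..t, g a * f (t - a)) t := by
  set P := fun x => ∫ s in 0..max x 0, f s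
  obtain ⟨C, hP_lip⟩ := exists_lipschitzOnWith_integral_max_zero hf T
  have hcont (u : ℝ) : ContinuousOn (fun a => g a * P (u - a)) (Ici 0) :=
    hg.mul ((continuous_integral_max_zero hf).comp (continuous_sub_left u)).continuousOn
  have hIoc : uIoc 0 T = Ioc 0 T := uIoc_of_le (ht.trans htT).le
  have hF_meas : ∀ᶠ u in 𝓝 t,
      AEStronglyMeasurable (fun a => g a * P (u - a)) (volume.restrict (uIoc 0 T)) :=
    Eventually.of_forall fun u =>
      ((hcont u).mono (hIoc ▸ Ioc_subset_Ioi_self.trans Ioi_subset_Ici_self)).aestronglyMeasurable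
        measurableSet_uIoc
  have hF'_meas : AEStronglyMeasurable ((Iic t).indicator fun a => g a * f (t - a))
      (volume.restrict (uIoc 0 T)) := by
    rw [aestronglyMeasurable_indicator_iff measurableSet_Iic,
      Measure.restrict_restrict measurableSet_Iic, hIoc]
    refine ContinuousOn.aestronglyMeasurable ?_ (measurableSet_Iic.inter measurableSet_Ioc)
    exact (hg.mono fun a ha => ha.2.1.le).mul (hf.comp (continuous_sub_left t).continuousOn
      fun a ha => mem_Ici.2 (sub_nonneg.2 ha.1))
  have h_lip : ∀ᵐ a, a ∈ uIoc 0 T → LipschitzOnWith (Real.nnabs (‖g a‖ * C))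
      (fun u => g a * P (u - a)) (Metric.ball t (T - t)) := by
    refine Eventually.of_forall fun a ha => (hP_lip.const_mul_comp_sub (g a) a).mono fun u hu => ?_
    rw [hIoc] at ha
    rw [Metric.mem_ball, Real.dist_eq, abs_lt] at hu
    exact show u - a ≤ T by linarith [ha.1]
  have h_diff : ∀ᵐ a, a ∈ uIoc 0 T →
      HasDerivAt (fun u => g a * P (u - a)) ((Iic t).indicator (fun a => g a * f (t - a)) a) t := by
    filter_upwards [Measure.ae_ne volume t] with a hat _
    rw [indicator_mul_right]
    exact (hasDerivAt_integral_max_zero_comp_sub hf hat).const_mul (g a)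
  obtain ⟨hF'_int, hderiv⟩ := hasDerivAt_integral_of_dominated_loc_of_lip
    (Metric.ball_mem_nhds t (sub_pos.2 htT)) hF_meas
    (((hcont t).mono Icc_subset_Ici_self).intervalIntegrable_of_Icc (ht.trans htT).le)
    hF'_meas h_lip (((hg.mono Icc_subset_Ici_self).intervalIntegrable_of_Icc
      (ht.trans htT).le).norm.mul_const C) h_diff
  rwa [integral_indicator_Iic_of_le ht.le htT.le hF'_int] at hderiv

theorem hasDerivAt_integral_mul_integral_sub (hg : ContinuousOn g (Ici 0))
    (hf : ContinuousOn f (Ici 0)) {t : ℝ} (ht : 0 < t) :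
    HasDerivAt (fun u => ∫ a in 0..u, g a * ∫ s in 0..u - a, f s)
      (∫ a in 0..t, g a * f (t - a)) t := by
  refine (hasDerivAt_integral_mul_integral_max_zero hg hf ht (lt_add_one t)).congr_of_eventuallyEq
    ?_
  filter_upwards [Ioo_mem_nhds ht (lt_add_one t)] with u hu
  exact integral_mul_integral_sub_eq_integral_max_zero hg hf ⟨hu.1.le, hu.2.le⟩

theorem hasDerivAt_integral_comp_sub_mul {ξ : ℝ → ℝ} (hg : ContinuousOn g (Ici 0))
    (hf : ContinuousOn f (Ici 0)) (hξ : ∀ x ≥ 0, ξ x = ξ 0 - ∫ s in 0..x, f s) {t : ℝ}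
    (ht : 0 < t) :
    HasDerivAt (fun u => ∫ a in 0..u, g (u - a) * ξ a)
      (ξ 0 * g t - ∫ a in 0..t, g (t - a) * f a) t := by
  have hF : ContinuousOn (fun x => ∫ s in 0..x, f s) (Ici 0) :=
    (continuous_integral_max_zero hf).continuousOn.congr fun x hx => by
      simp only [max_eq_left (mem_Ici.1 hx)]
  have hsplit : ∀ u > 0, ∫ a in 0..u, g (u - a) * ξ a =
      ξ 0 * (∫ a in 0..u, g a) - ∫ a in 0..u, g a * ∫ s in 0..u - a, f s := by
    intro u hu
    have hint_g : IntervalIntegrable g volume 0 u :=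
      (hg.mono Icc_subset_Ici_self).intervalIntegrable_of_Icc hu.le
    have hint_gF : IntervalIntegrable (fun a => g a * ∫ s in 0..u - a, f s) volume 0 u := by
      refine ((hg.mono Icc_subset_Ici_self).mul (hF.comp (continuous_sub_left u).continuousOn
        fun a ha => ?_)).intervalIntegrable_of_Icc hu.le
      exact mem_Ici.2 (sub_nonneg.2 ha.2)
    rw [integral_comp_sub_mul_comm, ← intervalIntegral.integral_const_mul,
      ← integral_sub (hint_g.const_mul _) hint_gF]
    refine integral_congr fun a ha => ?_
    rw [uIcc_of_le hu.le] at ha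
    simp only [hξ (u - a) (sub_nonneg.2 ha.2)]
    ring
  have hG : HasDerivAt (fun u => ∫ a in 0..u, g a) (g t) t :=
    integral_hasDerivAt_right ((hg.mono Icc_subset_Ici_self).intervalIntegrable_of_Icc ht.le)
      ((hg.mono Ioi_subset_Ici_self).stronglyMeasurableAtFilter isOpen_Ioi t ht)
      (hg.continuousAt (Ici_mem_nhds ht))
  rw [integral_comp_sub_mul_comm]
  exact ((hG.const_mul (ξ 0)).sub (hasDerivAt_integral_mul_integral_sub hg hf ht))
    |>.congr_of_eventuallyEq (eventually_of_mem (Ioi_mem_nhds ht) hsplit)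

end Convolution

theorem hasDerivAt_setIntegral_Ioi_mul_comp_add {w h h' : ℝ → ℝ} (hw : IntegrableOn w (Ioi 0))
    (hh : ∀ x > 0, HasDerivAt h (h' x) x) {C M : ℝ} (hC : ∀ x > 0, ‖h x‖ ≤ C)
    (hM : ∀ x > 0, ‖h' x‖ ≤ M) {t : ℝ} (ht : 0 < t) :
    HasDerivAt (fun s => ∫ b in Ioi 0, w b * h (b + s))
      (∫ b in Ioi 0, w b * h' (b + t)) t := by
  have hpos : ∀ᵐ b ∂(volume.restrict (Ioi (0:ℝ))), 0 < b :=
    ae_restrict_mem measurableSet_Ioi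
  have hh_cont : ContinuousOn h (Ioi 0) := fun x hx =>
    (hh x hx).continuousAt.continuousWithinAt
  have hF_meas (s : ℝ) (hs : 0 < s) :
      AEStronglyMeasurable (fun b => h (b + s)) (volume.restrict (Ioi 0)) :=
    (hh_cont.comp (continuous_add_const s).continuousOn fun b (hb : 0 < b) =>
      mem_Ioi.2 (add_pos hb hs)).aestronglyMeasurable measurableSet_Ioi
  have hF'_meas : AEStronglyMeasurable (fun b => h' (b + t)) (volume.restrict (Ioi 0)) := by
    refine ((measurable_deriv h).comp (measurable_add_const t)).aestronglyMeasurable.congr ?_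
    filter_upwards [hpos] with b hb
    exact (hh _ (add_pos hb ht)).deriv
  have h_bound : ∀ᵐ b ∂(volume.restrict (Ioi (0:ℝ))), ∀ s ∈ Ioi (0:ℝ),
      ‖w b * h' (b + s)‖ ≤ M * ‖w b‖ := by
    filter_upwards [hpos] with b hb s (hs : 0 < s)
    rw [norm_mul, mul_comm]
    exact mul_le_mul_of_nonneg_right (hM _ (add_pos hb hs)) (norm_nonneg _)
  have h_diff : ∀ᵐ b ∂(volume.restrict (Ioi (0:ℝ))), ∀ s ∈ Ioi (0:ℝ),
      HasDerivAt (fun s => w b * h (b + s)) (w b * h' (b + s)) s := by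
    filter_upwards [hpos] with b hb s (hs : 0 < s)
    exact ((hh _ (add_pos hb hs)).comp_const_add b s).const_mul (w b)
  exact (hasDerivAt_integral_of_dominated_loc_of_deriv_le (Ioi_mem_nhds ht)
    (eventually_of_mem (Ioi_mem_nhds ht) fun s hs => hw.aestronglyMeasurable.mul (hF_meas s hs))
    (hw.mul_bdd (hF_meas t ht) (by filter_upwards [hpos] with b hb using hC _ (add_pos hb ht)))
    (hw.aestronglyMeasurable.mul hF'_meas) h_bound (hw.norm.const_mul M) h_diff).2

theorem norm_setIntegral_Ioi_le_of_le {f : ℝ → ℝ} {a x : ℝ} (hf : ∀ y > a, 0 ≤ f y)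
    (hf_int : IntegrableOn f (Ioi a)) (hax : a ≤ x) :
    ‖∫ y in Ioi x, f y‖ ≤ ∫ y in Ioi a, f y := by
  rw [Real.norm_eq_abs, abs_of_nonneg (setIntegral_nonneg measurableSet_Ioi fun y (hy : x < y) =>
    hf y (hax.trans_lt hy))]
  refine setIntegral_mono_set hf_int ?_ (Ioi_subset_Ioi hax).eventuallyLE
  filter_upwards [ae_restrict_mem measurableSet_Ioi] with y hy using hf y hy

theorem infected_representation_derivative_general
    (τ : ℝ)
    (f : ℝ → ℝ) (hf_cont : ContinuousOn f (Set.Ici 0))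
    (hf_nonneg : ∀ a ≥ (0:ℝ), 0 ≤ f a)
    (hf_bdd : ∃ M : ℝ, ∀ a ≥ (0:ℝ), f a ≤ M)
    (hf_int : IntegrableOn f (Set.Ioi 0))
    (hf_one : ∫ a in Set.Ioi (0:ℝ), f a = 1)
    (ξ : ℝ → ℝ) (hξ : ∀ a : ℝ, ξ a = ∫ q in Set.Ioi a, f q)
    (σ : ℝ → ℝ) (hσ_cont : ContinuousOn σ (Set.Ici 0))
    (φ : ℝ → ℝ)
    (hφ_int : IntegrableOn (fun b => φ b / ξ b) (Set.Ioi 0))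
    (I : ℝ → ℝ)
    (hI : ∀ t : ℝ, I t =
      (∫ a in (0:ℝ)..t, τ * σ (t - a) * ξ a)
        + ∫ a in Set.Ioi t, φ (a - t) * ξ a / ξ (a - t)) :
    ∀ t > (0:ℝ), HasDerivAt I
      (τ * σ t - (∫ a in (0:ℝ)..t, τ * σ (t - a) * f a)
        - ∫ a in Set.Ioi t, φ (a - t) * f a / ξ (a - t)) t := by
  intro t ht
  obtain ⟨M, hM⟩ := hf_bdd
  have hξ_zero : ξ 0 = 1 := (hξ 0).trans hf_one
  have hξ_sub : ∀ x ≥ 0, ξ x = ξ 0 - ∫ s in 0..x, f s := fun x hx => by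
    rw [hξ x, hξ 0, ← integral_Ioi_sub_Ioi hf_int hx, sub_sub_cancel]
  have hξ_le_one : ∀ x > 0, ‖ξ x‖ ≤ 1 := fun x hx =>
    hf_one ▸ hξ x ▸ norm_setIntegral_Ioi_le_of_le (fun y hy => hf_nonneg y hy.le) hf_int hx.le
  have hf_le : ∀ x > 0, ‖-f x‖ ≤ M := fun x hx => by
    rw [norm_neg, Real.norm_eq_abs, abs_of_nonneg (hf_nonneg x hx.le)]
    exact hM x hx.le
  have hshift (K : ℝ → ℝ) (s : ℝ) : ∫ a in Ioi s, φ (a - s) * K a / ξ (a - s) =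
      ∫ b in Ioi 0, φ b / ξ b * K (b + s) := by
    rw [setIntegral_Ioi_eq_setIntegral_Ioi_zero_comp_add]
    simp only [add_sub_cancel_right, mul_div_right_comm]
  have hconv := hasDerivAt_integral_comp_sub_mul (g := fun a => τ * σ a)
    (continuousOn_const.mul hσ_cont) hf_cont hξ_sub ht
  have htail := hasDerivAt_setIntegral_Ioi_mul_comp_add hφ_int
    (fun x => hasDerivAt_of_eq_sub_integral hf_cont hξ_sub) hξ_le_one hf_le ht
  simp only [← hshift] at htail
  refine ((hconv.add htail).congr_of_eventuallyEq (Eventually.of_forall hI)).congr_deriv ?_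
  rw [hξ_zero, hshift f, one_mul]
  simp only [mul_neg, MeasureTheory.integral_neg]
  ring

/-- Differentiating the representation
`I(t) = ∫₀ᵗ τσ(t−a)ξ(a) da + ∫ₜ^∞ φ(a−t)ξ(a)/ξ(a−t) da` of the infected
population (with survival function `ξ(a) = ∫ₐ^∞ f`) yields
`I'(t) = τσ(t) − ∫₀ᵗ τσ(t−a)f(a) da − ∫ₜ^∞ φ(a−t)f(a)/ξ(a−t) da`. -/
theorem infected_representation_derivative
    (τ : ℝ) (hτ : 0 < τ)
    (f : ℝ → ℝ) (hf_cont : ContinuousOn f (Set.Ici 0))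
    (hf_nonneg : ∀ a ≥ (0:ℝ), 0 ≤ f a)
    (hf_bdd : ∃ M : ℝ, ∀ a ≥ (0:ℝ), f a ≤ M)
    (hf_int : IntegrableOn f (Set.Ioi 0))
    (hf_one : ∫ a in Set.Ioi (0:ℝ), f a = 1)
    (ξ : ℝ → ℝ) (hξ : ∀ a : ℝ, ξ a = ∫ q in Set.Ioi a, f q)
    (hξ_pos : ∀ a ≥ (0:ℝ), 0 < ξ a)
    (σ : ℝ → ℝ) (hσ_cont : ContinuousOn σ (Set.Ici 0))
    (φ : ℝ → ℝ) (hφ_cont : ContinuousOn φ (Set.Ici 0))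
    (hφ_nonneg : ∀ b ≥ (0:ℝ), 0 ≤ φ b)
    (hφ_int : IntegrableOn (fun b => φ b / ξ b) (Set.Ioi 0))
    (I : ℝ → ℝ)
    (hI : ∀ t : ℝ, I t =
      (∫ a in (0:ℝ)..t, τ * σ (t - a) * ξ a)
        + ∫ a in Set.Ioi t, φ (a - t) * ξ a / ξ (a - t)) :
    ∀ t > (0:ℝ), HasDerivAt I
      (τ * σ t - (∫ a in (0:ℝ)..t, τ * σ (t - a) * f a)
        - ∫ a in Set.Ioi t, φ (a - t) * f a / ξ (a - t)) t :=
  infected_representation_derivative_general τ f hf_cont hf_nonneg hf_bdd hf_int hf_one ξ hξ σ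
    hσ_cont φ hφ_int I hI
end
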